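/- Let n ≥ 3, let u_1, u_2, …, u_n be the vertices of a regular n-gon (e.g., u_k = (cos(2πk/n), sin(2πk/n))), let T_n be the geometric path with edges u_1u_2, u_2u_3, …, u_{n−1}u_n, and let T_n^c be its complement geometric graph on the same vertex set. Then T_n^c contains no plane spanning tree. -/

import Mathlib

open Real

/-- Points of the Euclidean plane. -/
abbrev Pt : Type := ℝ × ℝ

/-- A point set is in general position if no three distinct points of it are collinear. -/
def GenPos (Q : Set Pt) : Prop :=
  ∀ u ∈ Q, ∀ v ∈ Q, ∀ w ∈ Q,
    u ≠ v → u ≠ w → v ≠ w → ¬ Collinear ℝ ({u, v, w} : Set Pt)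

/-- All edges of the graph `G` join points of `Q`:  `G` is a geometric graph
with vertex set (contained in) `Q`. -/
def EdgesIn (G : SimpleGraph Pt) (Q : Set Pt) : Prop :=
  ∀ ⦃a b : Pt⦄, G.Adj a b → a ∈ Q ∧ b ∈ Q

/-- The straight-line drawing of `T` is plane (non-self intersecting): the closed
segments of two distinct edges intersect in at most a common endpoint. -/
def IsPlane (T : SimpleGraph Pt) : Prop :=
  ∀ ⦃a b c d : Pt⦄, T.Adj a b → T.Adj c d → ({a, b} : Set Pt) ≠ ({c, d} : Set Pt) →
    segment ℝ a b ∩ segment ℝ c d ⊆ ({a, b} : Set Pt) ∩ ({c, d} : Set Pt)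

/-- The induced geometric subgraph of `G` on the point set `Q`, viewed again as a
graph on the whole plane. -/
def induceOn (G : SimpleGraph Pt) (Q : Set Pt) : SimpleGraph Pt where
  Adj a b := G.Adj a b ∧ a ∈ Q ∧ b ∈ Q
  symm := ⟨fun a b h => ⟨h.1.symm, h.2.2, h.2.1⟩⟩
  loopless := ⟨fun a h => G.ne_of_adj h.1 rfl⟩

/-- `G` (a geometric graph with vertex set `Q`) has a plane spanning tree: a subgraph
`T` of `G`, with all edges inside `Q`, whose straight-line drawing is plane and whose
induced graph on `Q` is a tree (in particular it is connected, i.e. spanning). -/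
def HasPlaneSpanningTree (Q : Set Pt) (G : SimpleGraph Pt) : Prop :=
  ∃ T : SimpleGraph Pt, T ≤ G ∧ EdgesIn T Q ∧ IsPlane T ∧ (T.induce Q).IsTree

/-- `u, v, w` are three distinct points of `Q` forming an empty triangle of the point
set `Q`: no point of `Q` lies in the interior of the convex hull of `{u, v, w}`. -/
def EmptyTri (Q : Set Pt) (u v w : Pt) : Prop :=
  u ∈ Q ∧ v ∈ Q ∧ w ∈ Q ∧ u ≠ v ∧ u ≠ w ∧ v ≠ w ∧
    ∀ p ∈ Q, p ∉ interior (convexHull ℝ ({u, v, w} : Set Pt))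

/-- `u, v, w` is a disconnected empty triangle of the geometric graph `G` on point set
`Q` : it is an empty triangle of `Q` and the subgraph of `G` induced by `{u, v, w}` is
not connected. -/
def DiscTri (Q : Set Pt) (G : SimpleGraph Pt) (u v w : Pt) : Prop :=
  EmptyTri Q u v w ∧ ¬ (G.induce ({u, v, w} : Set Pt)).Connected

/-- `sG Q G` is the number of disconnected empty triangles of the geometric graph `G`
with vertex set `Q` (triangles counted as unordered triples of points). -/
noncomputable def sG (Q : Set Pt) (G : SimpleGraph Pt) : ℕ :=
  {t : Set Pt | ∃ u v w, t = {u, v, w} ∧ DiscTri Q G u v w}.ncard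

/-! ### Auxiliary material for the proof -/

/-- Cross product (twice the signed area) of the triangle `A B C`. -/
def cr (A B C : Pt) : ℝ := (B.1 - A.1) * (C.2 - A.2) - (B.2 - A.2) * (C.1 - A.1)

lemma cr_swap (A B C : Pt) : cr A C B = - cr A B C := by unfold cr; ring
lemma cr_cyc (A B C : Pt) : cr B C A = cr A B C := by unfold cr; ring
lemma cr_self (A B : Pt) : cr A B A = 0 := by unfold cr; ring
lemma cr_self' (A B : Pt) : cr A A B = 0 := by unfold cr; ring
lemma cr_last (A B : Pt) : cr A B B = 0 := by unfold cr; ring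

lemma key_trig (x y : ℝ) : Real.sin (2*x) + Real.sin (2*y) - Real.sin (2*x + 2*y)
    = 4 * Real.sin x * Real.sin y * Real.sin (x+y) := by
  simp only [Real.sin_add, Real.sin_two_mul, Real.cos_two_mul']
  linear_combination (-2*Real.sin x*Real.cos x) * Real.sin_sq_add_cos_sq y +
    (-2*Real.sin y*Real.cos y) * Real.sin_sq_add_cos_sq x

lemma cr_form (α β γ : ℝ) :
    cr (Real.cos α, Real.sin α) (Real.cos β, Real.sin β) (Real.cos γ, Real.sin γ)
      = 4 * Real.sin ((β-α)/2) * Real.sin ((γ-β)/2) * Real.sin ((γ-α)/2) := by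
  have h := key_trig ((β-α)/2) ((γ-β)/2)
  have e1 : 2*((β-α)/2) = β-α := by ring
  have e2 : 2*((γ-β)/2) = γ-β := by ring
  rw [e1, e2] at h
  have e4 : (β-α) + (γ-β) = γ-α := by ring
  have e3 : (β-α)/2 + (γ-β)/2 = (γ-α)/2 := by ring
  rw [e4, e3] at h
  unfold cr
  simp only
  rw [← h, Real.sin_sub, Real.sin_sub, Real.sin_sub]
  ring

/-- Points of the regular `n`-gon, listed in counterclockwise order, have positive
cross product. -/
lemma cr_pos {n : ℕ} (hn : 1 ≤ n) {u : ℕ → Pt}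
    (hu : ∀ k, u k = (Real.cos (2 * Real.pi * k / n), Real.sin (2 * Real.pi * k / n)))
    {a b c : ℕ} (h1 : 1 ≤ a) (h2 : a < b) (h3 : b < c) (h4 : c ≤ n) :
    0 < cr (u a) (u b) (u c) := by
  rw [hu a, hu b, hu c, cr_form]
  have hn0 : (0:ℝ) < n := by exact_mod_cast Nat.lt_of_lt_of_le Nat.zero_lt_one hn
  have key : ∀ p q : ℕ, 1 ≤ p → p < q → q ≤ n →
      0 < Real.sin ((2 * Real.pi * q / n - 2 * Real.pi * p / n) / 2) := by
    intro p q hp1 hpq hqn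
    have e : (2 * Real.pi * q / n - 2 * Real.pi * p / n) / 2 = Real.pi * (((q:ℝ) - p) / n) := by
      ring
    rw [e]
    have hq : (q:ℝ) ≤ n := by exact_mod_cast hqn
    have hp : (1:ℝ) ≤ p := by exact_mod_cast hp1
    have hpq' : (p:ℝ) < q := by exact_mod_cast hpq
    apply Real.sin_pos_of_pos_of_lt_pi
    · have : (0:ℝ) < (q:ℝ) - p := by linarith
      positivity
    · have h1 : ((q:ℝ) - p) / n < 1 := by
        rw [div_lt_one hn0]; linarith
      nlinarith [Real.pi_pos]
  have k1 := key a b h1 h2 (le_of_lt (lt_of_lt_of_le h3 h4))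
  have k2 := key b c (le_trans h1 (le_of_lt h2)) h3 h4
  have k3 := key a c h1 (lt_trans h2 h3) h4
  positivity

/-- Two segments whose endpoints are strictly separated by each other's lines
intersect. -/
lemma seg_cross {A B C D : Pt} (hC : cr A B C < 0) (hD : 0 < cr A B D)
    (hA : 0 < cr C D A) (hB : cr C D B < 0) :
    (segment ℝ A B ∩ segment ℝ C D).Nonempty := by
  have hdf : 0 < cr A B D - cr A B C := by linarith
  have hdg : 0 < cr C D A - cr C D B := by linarith
  set t := (-(cr A B C))/(cr A B D - cr A B C) with hts
  set s := (cr C D A)/(cr C D A - cr C D B) with hss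
  have ht0 : 0 < t := div_pos (by linarith) hdf
  have ht1 : t < 1 := (div_lt_one hdf).2 (by linarith)
  have hs0 : 0 < s := div_pos (by linarith) hdg
  have hs1 : s < 1 := (div_lt_one hdg).2 (by linarith)
  have hPQ : (1-s) • A + s • B = (1-t) • C + t • D := by
    have hdf' : cr A B D - cr A B C ≠ 0 := ne_of_gt hdf
    have hdg' : cr C D A - cr C D B ≠ 0 := ne_of_gt hdg
    rw [Prod.ext_iff]
    constructor <;>
    · simp only [Prod.fst_add, Prod.snd_add, Prod.smul_fst, Prod.smul_snd, smul_eq_mul,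
        hts, hss]
      unfold cr
      unfold cr at hdf' hdg'
      field_simp
      ring
  refine ⟨(1-s) • A + s • B, ⟨1-s, s, by linarith, by linarith, by ring, rfl⟩, ?_⟩
  rw [hPQ]
  exact ⟨1-t, t, by linarith, by linarith, by ring, rfl⟩

/-- Let `u 1, …, u n` (`n ≥ 3`) be the vertices of a regular `n`-gon,
`Tn` the geometric path `u 1, u 2, …, u n`, and `Tc` its complement geometric graph on
the same vertex set `P`. Then `Tc` contains no plane spanning tree. -/
theorem regular_ngon_path_complement_no_plane_spanning_tree
    (n : ℕ) (hn : 3 ≤ n)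
    (u : ℕ → Pt)
    (hu : ∀ k, u k = (Real.cos (2 * Real.pi * k / n), Real.sin (2 * Real.pi * k / n)))
    (P : Finset Pt) (hP : P = (Finset.Icc 1 n).image u)
    (Tn : SimpleGraph Pt)
    (hTn : ∀ a b, Tn.Adj a b ↔ ∃ k, 1 ≤ k ∧ k < n ∧
      ((a = u k ∧ b = u (k + 1)) ∨ (a = u (k + 1) ∧ b = u k)))
    (Tc : SimpleGraph Pt)
    (hTc : ∀ a b, Tc.Adj a b ↔
      a ∈ (↑P : Set Pt) ∧ b ∈ (↑P : Set Pt) ∧ a ≠ b ∧ ¬ Tn.Adj a b) :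
    ¬ HasPlaneSpanningTree ↑P Tc := by
  rintro ⟨T, hle, hE, hplane, htree⟩
  have hn1 : 1 ≤ n := by omega
  -- `u` is injective on `[1, n]`
  have hkey : ∀ a b : ℕ, 1 ≤ a → a < b → b ≤ n → u a ≠ u b := by
    intro a b ha hab hbn heq
    by_cases h1 : 1 < a
    · have hpos := cr_pos hn1 hu (le_refl 1) h1 hab hbn
      rw [heq, cr_last] at hpos
      exact lt_irrefl 0 hpos
    · have ha1 : a = 1 := by omega
      by_cases h2 : b < n
      · have hpos := cr_pos hn1 hu ha hab h2 (le_refl n)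
        rw [heq, cr_self'] at hpos
        exact lt_irrefl 0 hpos
      · have hbn' : b = n := by omega
        have hpos := cr_pos hn1 hu (le_refl 1) (show 1 < 2 by omega)
          (show 2 < n by omega) (le_refl n)
        rw [← ha1, ← hbn', ← heq, cr_self] at hpos
        exact lt_irrefl 0 hpos
  have hinj : ∀ a b : ℕ, 1 ≤ a → a ≤ n → 1 ≤ b → b ≤ n → u a = u b → a = b := by
    intro a b ha1 han hb1 hbn heq
    rcases lt_trichotomy a b with h | h | h
    · exact absurd heq (hkey a b ha1 h hbn)
    · exact h
    · exact absurd heq.symm (hkey b a hb1 h han)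
  have humem : ∀ k, 1 ≤ k → k ≤ n → u k ∈ (↑P : Set Pt) := by
    intro k h1 h2
    rw [hP]
    simp only [Finset.coe_image, Set.mem_image, Finset.mem_coe, Finset.mem_Icc]
    exact ⟨k, ⟨h1, h2⟩, rfl⟩
  -- no two crossing edges
  have hcross : ∀ i p j q : ℕ, 1 ≤ i → i < p → p < j → j < q → q ≤ n →
      T.Adj (u i) (u j) → T.Adj (u p) (u q) → False := by
    intro i p j q hi hip hpj hjq hqn e1 e2
    have hjn : j ≤ n := le_trans (le_of_lt hjq) hqn
    have c1 : cr (u i) (u j) (u p) < 0 := by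
      have h := cr_pos hn1 hu hi hip hpj hjn
      rw [show cr (u i) (u j) (u p) = - cr (u i) (u p) (u j) from cr_swap _ _ _]
      linarith
    have c2 : 0 < cr (u i) (u j) (u q) := cr_pos hn1 hu hi (lt_trans hip hpj) hjq hqn
    have c3 : 0 < cr (u p) (u q) (u i) := by
      have h := cr_pos hn1 hu hi hip (lt_trans hpj hjq) hqn
      rw [cr_cyc]
      exact h
    have c4 : cr (u p) (u q) (u j) < 0 := by
      have h := cr_pos hn1 hu (le_trans hi (le_of_lt hip)) hpj hjq hqn
      rw [show cr (u p) (u q) (u j) = - cr (u p) (u j) (u q) from cr_swap _ _ _]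
      linarith
    have hip' : u i ≠ u p := hkey i p hi hip (by omega)
    have hiq : u i ≠ u q := hkey i q hi (by omega) hqn
    have hjp : u j ≠ u p := fun h => hkey p j (by omega) hpj (by omega) h.symm
    have hjq' : u j ≠ u q := hkey j q (by omega) hjq hqn
    have hset : ({u i, u j} : Set Pt) ≠ {u p, u q} := by
      intro h
      have : u i ∈ ({u p, u q} : Set Pt) := h ▸ (by left; rfl)
      rcases this with h' | h'
      · exact hip' h'
      · exact hiq h'
    obtain ⟨X, hX1, hX2⟩ := seg_cross c1 c2 c3 c4
    have hXmem := hplane e1 e2 hset ⟨hX1, hX2⟩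
    obtain ⟨hXa, hXb⟩ := hXmem
    rcases hXa with h' | h' <;> rcases hXb with h'' | h''
    · exact hip' (h'.symm.trans h'')
    · exact hiq (h'.symm.trans h'')
    · exact hjp (h'.symm.trans h'')
    · exact hjq' (h'.symm.trans h'')
  -- no edges between consecutive vertices
  have hnc : ∀ a, 1 ≤ a → a < n → ¬ T.Adj (u a) (u (a+1)) := by
    intro a h1 h2 hadj
    have h := (hTc _ _).1 (hle hadj)
    exact h.2.2.2 ((hTn _ _).2 ⟨a, h1, h2, Or.inl ⟨rfl, rfl⟩⟩)
  -- every vertex has a neighbour in T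
  have hnbr : ∀ k, 1 ≤ k → k ≤ n → ∃ c, 1 ≤ c ∧ c ≤ n ∧ c ≠ k ∧ T.Adj (u k) (u c) := by
    intro k h1 h2
    have hk' : ∃ k', 1 ≤ k' ∧ k' ≤ n ∧ k' ≠ k := by
      by_cases h : k = 1
      · exact ⟨2, by omega, by omega, by omega⟩
      · exact ⟨1, le_rfl, by omega, by omega⟩
    obtain ⟨k', hk1', hk2', hk3'⟩ := hk'
    have hxne : u k ≠ u k' := fun h => hk3' (hinj k' k hk1' hk2' h1 h2 h.symm)
    have hxmem := humem k h1 h2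
    have hymem := humem k' hk1' hk2'
    obtain ⟨w⟩ := htree.isConnected.preconnected
      (⟨u k, hxmem⟩ : (↑P : Set Pt)) (⟨u k', hymem⟩ : (↑P : Set Pt))
    have hnn : ¬ w.Nil := SimpleGraph.Walk.not_nil_of_ne
      (by intro h; exact hxne (congrArg Subtype.val h))
    have hadj := SimpleGraph.Walk.adj_snd hnn
    have hTadj0 : T.Adj (u k) (w.getVert 1).val := by simpa using hadj
    obtain ⟨z, hzmem, hTadj⟩ : ∃ z : Pt, z ∈ (↑P : Set Pt) ∧ T.Adj (u k) z :=
      ⟨(w.getVert 1).val, (w.getVert 1).2, hTadj0⟩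
    rw [hP] at hzmem
    simp only [Finset.coe_image, Set.mem_image, Finset.mem_coe, Finset.mem_Icc] at hzmem
    obtain ⟨c, ⟨hc1, hc2⟩, hcz⟩ := hzmem
    have hTadj' : T.Adj (u k) (u c) := by rw [hcz]; exact hTadj
    refine ⟨c, hc1, hc2, ?_, hTadj'⟩
    intro h
    rw [h] at hTadj'
    exact T.irrefl hTadj'
  -- the set of edge lengths
  set S : Set ℕ := {d | ∃ a b, 1 ≤ a ∧ a < b ∧ b ≤ n ∧ T.Adj (u a) (u b) ∧ d = b - a}
    with hSdef
  have hSne : S.Nonempty := by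
    obtain ⟨c, hc1, hc2, hc3, hc4⟩ := hnbr 1 le_rfl (by omega)
    have hc1' : 1 < c := by omega
    exact ⟨c - 1, 1, c, le_rfl, hc1', hc2, hc4, rfl⟩
  obtain ⟨a, b, ha1, hab, hbn, hadj, hd⟩ := Nat.sInf_mem hSne
  have hmin : ∀ e ∈ S, sInf S ≤ e := fun e he => Nat.sInf_le he
  have hd2 : 2 ≤ sInf S := by
    rcases Nat.lt_or_ge (sInf S) 2 with h | h
    · exfalso
      have hb : b = a + 1 := by omega
      exact hnc a ha1 (by omega) (hb ▸ hadj)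
    · exact h
  obtain ⟨c, hc1, hcn, hcne, hcadj⟩ := hnbr (a+1) (by omega) (by omega)
  rcases Nat.lt_or_ge c a with hlt | hge
  · exact hcross c a (a+1) b hc1 hlt (by omega) (by omega) hbn hcadj.symm hadj
  · rcases Nat.lt_or_ge b c with hgt | hle
    · exact hcross a (a+1) b c ha1 (by omega) (by omega) hgt hcn hadj hcadj
    · rcases Nat.lt_or_ge c (a+1) with h' | h'
      · have hca : c = a := by omega
        have h1S : (1:ℕ) ∈ S :=
          ⟨a, a+1, ha1, by omega, by omega, by subst hca; exact hcadj.symm, by omega⟩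
        have := hmin 1 h1S
        omega
      · have hc' : a + 1 < c := by omega
        have h1S : c - (a+1) ∈ S := ⟨a+1, c, by omega, hc', hcn, hcadj, rfl⟩
        have := hmin _ h1S
        omega
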